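/- Let U = U_n·U_{n−1}·⋯·U_1 (n ≥ 1) be a normal-form word in the letters {S_1,...,S_4, S_1ᵀ,...,S_4ᵀ} (no two adjacent letters equal, and a letter S_jᵀ is never immediately followed on its right by a letter S_i with i ≠ j). Let r_i(U) denote the i-th row sum of the matrix U, i.e. the i-th entry of U·𝟙. Then: (i) r_i(U) + r_j(U) > 0 for all i ≠ j; (ii) if the leftmost letter U_n equals S_h, then r_h(U) > 0 and 2·r_i(U) < r_1(U)+r_2(U)+r_3(U)+r_4(U) for every i ≠ h; (iii) if the leftmost letter U_n equals S_hᵀ, then r_h(U) < 0 and 2·r_i(U) < r_1(U)+r_2(U)+r_3(U)+r_4(U) for every i ≠ h. -/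

import Mathlib

open Matrix

/-- The Apollonian generators `S₁, S₂, S₃, S₄`. -/
noncomputable def S : Fin 4 → Matrix (Fin 4) (Fin 4) ℝ := fun i =>
  Matrix.of fun j k =>
    if j = i then (if k = i then -1 else 2) else (if j = k then 1 else 0)

/-- A letter of the super-Apollonian group: `(j, false)` denotes `S j` and
`(j, true)` denotes the dual generator `S jᵀ`. -/
noncomputable def gen : Fin 4 × Bool → Matrix (Fin 4) (Fin 4) ℝ :=
  fun a => if a.2 then (S a.1)ᵀ else S a.1

/-- The normal form condition on an adjacent pair of letters `a, b`, where `a`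
is immediately to the left of `b` in the word:
(i) `a ≠ b`, and (ii) if `a = S jᵀ` then `b` is not `S i` for any `i ≠ j`. -/
def NormalRel : Fin 4 × Bool → Fin 4 × Bool → Prop := fun a b =>
  a ≠ b ∧ (a.2 = true → b.2 = false → b.1 = a.1)

/-- The `i`-th row sum of a `4 × 4` matrix. -/
noncomputable def rowSum (U : Matrix (Fin 4) (Fin 4) ℝ) (i : Fin 4) : ℝ :=
  ∑ j, U i j

/-! Write `v = U·𝟙` and `σ = ∑ k, v k`. Left multiplication by `S h` only replaces `v h` by
`2σ - 3 v h`, while `(S h)ᵀ` replaces `v h` by `-v h` and adds `2 v h` to every other entry.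
The conclusion for the leftmost letter is therefore an invariant along normal-form words: the
normal-form condition on the letter to its right supplies exactly what each step needs, namely
`2 v h < σ` before `S h`, and `0 < v h` together with `2 v i < σ` for `i ≠ h` before `(S h)ᵀ`.
Each resulting inequality is linear arithmetic in the four entries once the two indices outside
a given pair are named. -/

lemma rowSum_eq_mulVec_one (U : Matrix (Fin 4) (Fin 4) ℝ) : rowSum U = U *ᵥ 1 := by
  ext i
  simp [rowSum, mulVec, dotProduct]

lemma S_mulVec (h : Fin 4) (v : Fin 4 → ℝ) :
    S h *ᵥ v = Function.update v h (2 * ∑ k, v k - 3 * v h) := by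
  ext i
  rcases eq_or_ne i h with rfl | hi
  · have hcoef (k : Fin 4) :
        (if k = i then (-1 : ℝ) else 2) * v k = 2 * v k - if k = i then 3 * v k else 0 := by
      split_ifs <;> ring
    simp [S, mulVec, dotProduct, hcoef, Finset.sum_sub_distrib, Finset.mul_sum]
  · simp [S, mulVec, dotProduct, hi, ite_mul, Finset.sum_ite_eq]

lemma transpose_S_mulVec (h : Fin 4) (v : Fin 4 → ℝ) :
    (S h)ᵀ *ᵥ v = Function.update (fun i => v i + 2 * v h) h (-v h) := by
  ext i
  rcases eq_or_ne i h with rfl | hi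
  · simp [S, mulVec, dotProduct, ite_mul, Finset.sum_ite, Finset.filter_eq']
  · simp [S, mulVec, dotProduct, hi, ite_mul, Finset.sum_ite, Finset.filter_eq', add_comm]

lemma exists_pair_compl {i j : Fin 4} (hij : i ≠ j) :
    ∃ a b, a ≠ b ∧ a ≠ i ∧ a ≠ j ∧ b ≠ i ∧ b ≠ j ∧
      ∀ {M : Type*} [AddCommMonoid M] (v : Fin 4 → M), ∑ k, v k = v i + v j + v a + v b := by
  have hcard : (Finset.univ \ {i, j}).card = 2 := by
    rw [Finset.card_univ_sdiff, Finset.card_pair hij, Fintype.card_fin]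
  obtain ⟨a, b, hab, hs⟩ := Finset.card_eq_two.mp hcard
  have hmem : ∀ k, k ∈ ({a, b} : Finset (Fin 4)) → k ≠ i ∧ k ≠ j := by
    intro k hk
    simpa [← hs] using hk
  obtain ⟨hai, haj⟩ := hmem a (by simp)
  obtain ⟨hbi, hbj⟩ := hmem b (by simp)
  refine ⟨a, b, hab, hai, haj, hbi, hbj, fun v => ?_⟩
  rw [← Finset.sum_sdiff (Finset.subset_univ {i, j}), hs, Finset.sum_pair hab,
    Finset.sum_pair hij]
  abel

lemma sum_pos_of_pairwise {v : Fin 4 → ℝ} (hv : Pairwise fun i j => 0 < v i + v j) :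
    0 < ∑ k, v k := by
  have h01 : (0 : Fin 4) ≠ 1 := by decide
  obtain ⟨a, b, hab, -, -, -, -, hsum⟩ := exists_pair_compl h01
  linarith [hsum v, hv h01, hv hab]

lemma pairwise_update {v : Fin 4 → ℝ} {h : Fin 4} {x : ℝ}
    (hv : ∀ i j, i ≠ h → j ≠ h → i ≠ j → 0 < v i + v j) (hx : ∀ j, j ≠ h → 0 < x + v j) :
    Pairwise fun i j => 0 < Function.update v h x i + Function.update v h x j := by
  intro i j hij
  rcases eq_or_ne i h with rfl | hi
  · simpa [Function.update_of_ne hij.symm] using hx j hij.symm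
  rcases eq_or_ne j h with rfl | hj
  · simpa [Function.update_of_ne hij, add_comm] using hx i hij
  simpa [Function.update_of_ne hi, Function.update_of_ne hj] using hv i j hi hj hij

structure RowSumBounds (v : Fin 4 → ℝ) (a : Fin 4 × Bool) : Prop where
  pairwise_pos : Pairwise fun i j => 0 < v i + v j
  sign_head : if a.2 then v a.1 < 0 else 0 < v a.1
  two_mul_lt_sum : ∀ i, i ≠ a.1 → 2 * v i < ∑ k, v k

namespace RowSumBounds

variable {v : Fin 4 → ℝ} {b : Fin 4 × Bool}

lemma two_mul_lt_sum_of_ne (hv : RowSumBounds v b) {i : Fin 4} (hi : (i, false) ≠ b) :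
    2 * v i < ∑ k, v k := by
  rcases eq_or_ne i b.1 with rfl | hib
  · obtain ⟨i, _ | _⟩ := b
    · exact absurd rfl hi
    · have hneg : v i < 0 := hv.sign_head
      linarith [sum_pos_of_pairwise hv.pairwise_pos]
  · exact hv.two_mul_lt_sum i hib

lemma pos_of_normalRel (hv : RowSumBounds v b) {h : Fin 4} (hR : NormalRel (h, true) b) :
    0 < v h := by
  obtain ⟨k, _ | _⟩ := b
  · obtain rfl : k = h := hR.2 rfl rfl
    exact hv.sign_head
  · have hkh : k ≠ h := fun hkh => hR.1 (by rw [hkh])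
    have hneg : v k < 0 := hv.sign_head
    linarith [hv.pairwise_pos hkh]

end RowSumBounds

lemma rowSumBounds_S_mulVec {v : Fin 4 → ℝ} {h : Fin 4}
    (hv : Pairwise fun i j => 0 < v i + v j) (hh : 2 * v h < ∑ k, v k) :
    RowSumBounds (S h *ᵥ v) (h, false) := by
  have hσ := sum_pos_of_pairwise hv
  rw [S_mulVec]
  set σ := ∑ k, v k with hσ_def
  refine ⟨pairwise_update (fun i j _ _ hij => hv hij) fun j hj => ?_, ?_, fun i hi => ?_⟩
  · obtain ⟨a, b, -, haj, -, hbj, -, hsum⟩ := exists_pair_compl hj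
    linarith [hsum v, hv haj.symm, hv hbj.symm]
  · show 0 < Function.update v h (2 * σ - 3 * v h) h
    rw [Function.update_self]
    linarith
  · obtain ⟨a, b, hab, hah, -, hbh, -, hsum⟩ := exists_pair_compl hi.symm
    rw [hsum]
    simp only [Function.update_self, Function.update_of_ne hi, Function.update_of_ne hah,
      Function.update_of_ne hbh]
    linarith [hsum v, hv hab]

lemma rowSumBounds_transpose_S_mulVec {v : Fin 4 → ℝ} {h : Fin 4}
    (hv : Pairwise fun i j => 0 < v i + v j) (hh : 0 < v h)
    (hlt : ∀ i, i ≠ h → 2 * v i < ∑ k, v k) :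
    RowSumBounds ((S h)ᵀ *ᵥ v) (h, true) := by
  rw [transpose_S_mulVec]
  refine ⟨pairwise_update (fun i j _ _ hij => ?_) fun j hj => ?_, ?_, fun i hi => ?_⟩
  · linarith [hv hij]
  · linarith [hv hj.symm]
  · simpa using hh
  · obtain ⟨a, b, -, hah, -, hbh, -, hsum⟩ := exists_pair_compl hi.symm
    rw [hsum]
    simp only [Function.update_self, Function.update_of_ne hi, Function.update_of_ne hah,
      Function.update_of_ne hbh]
    linarith [hsum v, hlt i hi]

lemma rowSumBounds_gen_mulVec_one (a : Fin 4 × Bool) : RowSumBounds (gen a *ᵥ 1) a := by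
  have hone : Pairwise fun i j : Fin 4 => 0 < (1 : Fin 4 → ℝ) i + (1 : Fin 4 → ℝ) j :=
    fun _ _ _ => by norm_num
  obtain ⟨h, _ | _⟩ := a
  · exact rowSumBounds_S_mulVec hone (by norm_num)
  · exact rowSumBounds_transpose_S_mulVec hone one_pos fun _ _ => by norm_num

lemma RowSumBounds.gen_mulVec {v : Fin 4 → ℝ} {a b : Fin 4 × Bool} (hv : RowSumBounds v b)
    (hab : NormalRel a b) : RowSumBounds (gen a *ᵥ v) a := by
  obtain ⟨h, _ | _⟩ := a
  · exact rowSumBounds_S_mulVec hv.pairwise_pos (hv.two_mul_lt_sum_of_ne hab.1)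
  · refine rowSumBounds_transpose_S_mulVec hv.pairwise_pos (hv.pos_of_normalRel hab)
      fun i hi => hv.two_mul_lt_sum_of_ne ?_
    rintro rfl
    exact hi (hab.2 rfl rfl)

lemma rowSumBounds_prod_mulVec_one {a : Fin 4 × Bool} {t : List (Fin 4 × Bool)}
    (hnf : (a :: t).IsChain NormalRel) : RowSumBounds (((a :: t).map gen).prod *ᵥ 1) a := by
  induction t generalizing a with
  | nil => simpa using rowSumBounds_gen_mulVec_one a
  | cons b t ih =>
    rw [List.isChain_cons_cons] at hnf
    rw [List.map_cons, List.prod_cons, ← mulVec_mulVec]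
    exact (ih hnf.2).gen_mulVec hnf.1

theorem normal_form_row_sums_general
    (l : List (Fin 4 × Bool)) (hnf : l.Chain' NormalRel)
    (U : Matrix (Fin 4) (Fin 4) ℝ) (hU : U = (l.map gen).prod) :
    (∀ i j : Fin 4, i ≠ j → 0 < rowSum U i + rowSum U j) ∧
    (∀ h : Fin 4, l.head? = some (h, false) →
      0 < rowSum U h ∧
      ∀ i : Fin 4, i ≠ h → 2 * rowSum U i < ∑ k, rowSum U k) ∧
    (∀ h : Fin 4, l.head? = some (h, true) →
      rowSum U h < 0 ∧
      ∀ i : Fin 4, i ≠ h → 2 * rowSum U i < ∑ k, rowSum U k) := by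
  subst hU
  rw [rowSum_eq_mulVec_one]
  cases l with
  | nil => simp
  | cons a t =>
    have hv := rowSumBounds_prod_mulVec_one hnf
    refine ⟨fun i j hij => hv.pairwise_pos hij, ?_, ?_⟩ <;>
    · rintro h ⟨⟩
      exact ⟨hv.sign_head, hv.two_mul_lt_sum⟩

/-- Row-sum inequalities for normal-form words `U = U_n ⋯ U_1` in the
super-Apollonian generators (written as a list with leftmost letter first):
(i) `r_i(U) + r_j(U) > 0` for `i ≠ j`;
(ii) if the leftmost letter is `S h` then `r_h(U) > 0` and
`2·r_i(U) < r_1(U) + r_2(U) + r_3(U) + r_4(U)` for all `i ≠ h`;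
(iii) if the leftmost letter is `S hᵀ` then `r_h(U) < 0` and
`2·r_i(U) < r_1(U) + r_2(U) + r_3(U) + r_4(U)` for all `i ≠ h`. -/
theorem normal_form_row_sums
    (l : List (Fin 4 × Bool)) (hne : l ≠ []) (hnf : l.Chain' NormalRel)
    (U : Matrix (Fin 4) (Fin 4) ℝ) (hU : U = (l.map gen).prod) :
    (∀ i j : Fin 4, i ≠ j → 0 < rowSum U i + rowSum U j) ∧
    (∀ h : Fin 4, l.head? = some (h, false) →
      0 < rowSum U h ∧
      ∀ i : Fin 4, i ≠ h → 2 * rowSum U i < ∑ k, rowSum U k) ∧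
    (∀ h : Fin 4, l.head? = some (h, true) →
      rowSum U h < 0 ∧
      ∀ i : Fin 4, i ≠ h → 2 * rowSum U i < ∑ k, rowSum U k) :=
  normal_form_row_sums_general l hnf U hU
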